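/- arXiv:2501.17682 — 7 statements merged into one kernel-verified Lean document; each statement's English description precedes it below -/
import Mathlib

section
/- Let J and D be finite sets, let w : J → ℝ and y : J → ℝ with y j ≠ 0 for all j ∈ J, let b : D → J → ℝ and η : D → ℝ. Assume (i) for every j ∈ J, w j / y j = Σ_{d ∈ D} b d j · η d, and (ii) for every d ∈ D, η d · (1 − Σ_{j ∈ J} b d j · y j) = 0. Then Σ_{d ∈ D} η d = Σ_{j ∈ J} w j. -/
open Finset

/-- KKT conditions (stationarity and complementary slackness) of the
Proportional Fairness convex program imply that the sum of the Lagrange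
multipliers equals the total job weight. -/
theorem lagrange_multipliers_sum_eq_weight_sum
    (J D : Type*) [Fintype J] [Fintype D]
    (w y : J → ℝ) (b : D → J → ℝ) (η : D → ℝ)
    (hy : ∀ j, y j ≠ 0)
    (hstat : ∀ j, w j / y j = ∑ d, b d j * η d)
    (hcs : ∀ d, η d * (1 - ∑ j, b d j * y j) = 0) :
    ∑ d, η d = ∑ j, w j := by
  have hw : ∀ j, w j = (∑ d, η d * b d j) * y j := fun j => by
    simp_rw [mul_comm (η _), ← hstat j, div_mul_cancel₀ _ (hy j)]
  calc ∑ d, η d = ∑ d, η d * ∑ j, b d j * y j :=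
        sum_congr rfl fun d _ => by linear_combination hcs d
    _ = ∑ j, (∑ d, η d * b d j) * y j := Matrix.dotProduct_mulVec η (Matrix.of b) y
    _ = ∑ j, w j := by simp_rw [hw]
end

section
/- Let r ≥ 1 be a natural number and let Δ : {1, …, r} → ℝ satisfy Δ_i ≥ 0 for all i, Σ_{i=1}^{r} (r+1−i)·Δ_i ≤ r, and Σ_{i=1}^{ℓ} (r+1−i)·Δ_i ≥ ℓ for every ℓ with 1 ≤ ℓ ≤ r. Then Σ_{i=1}^{r} Δ_i ≤ H_r, where H_r = Σ_{k=1}^{r} 1/k is the r-th harmonic number. -/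
/-!
With `c i = r + 1 - i` and `x i = c i * Δ i`, the objective is `∑ x i / c i`. The weights
`1 / c i` increase with `i` and are at most `1`, the prefix sums of `x i - 1` are nonnegative and
their total is nonpositive, so summation by parts gives `∑ (x i - 1) / c i ≤ 0`, that is
`∑ Δ i ≤ ∑ 1 / c i = H_r`. The optimum `Δ i = 1 / c i` makes every prefix constraint tight.
-/

open Finset

theorem sum_Icc_mul_le_mul_sum_of_monotoneOn {R : Type*} [CommRing R] [LinearOrder R]
    [IsStrictOrderedRing R] {w y : ℕ → R} {W : R} :
    ∀ {n : ℕ}, MonotoneOn w (Icc 1 n : Set ℕ) → (∀ i ∈ Icc 1 n, w i ≤ W) →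
      (∀ ℓ ∈ Icc 1 n, 0 ≤ ∑ i ∈ Icc 1 ℓ, y i) →
      ∑ i ∈ Icc 1 n, w i * y i ≤ W * ∑ i ∈ Icc 1 n, y i
  | 0, _, _, _ => by simp
  | n + 1, hw, hW, hy => by
    have hmono : MonotoneOn w (Icc 1 n : Set ℕ) :=
      hw.mono (by simp only [coe_Icc]; exact Set.Icc_subset_Icc_right n.le_succ)
    have hle_last : ∀ i ∈ Icc 1 n, w i ≤ w (n + 1) := fun i hi =>
      hw (by simp_all; omega) (by simp) (by simp at hi; omega)
    have ih := sum_Icc_mul_le_mul_sum_of_monotoneOn hmono hle_last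
      (fun ℓ hℓ => hy ℓ (by simp at hℓ ⊢; omega))
    have hprefix : 0 ≤ ∑ i ∈ Icc 1 (n + 1), y i := hy (n + 1) (by simp)
    rw [sum_Icc_succ_top (by omega), sum_Icc_succ_top (by omega)] at *
    calc ∑ i ∈ Icc 1 n, w i * y i + w (n + 1) * y (n + 1)
        ≤ w (n + 1) * (∑ i ∈ Icc 1 n, y i + y (n + 1)) := by linarith
      _ ≤ W * (∑ i ∈ Icc 1 n, y i + y (n + 1)) :=
          mul_le_mul_of_nonneg_right (hW (n + 1) (by simp)) hprefix

theorem sum_Icc_reflect {M : Type*} [AddCommMonoid M] (f : ℕ → M) (n : ℕ) :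
    ∑ i ∈ Icc 1 n, f (n + 1 - i) = ∑ i ∈ Icc 1 n, f i :=
  sum_nbij' (fun i => n + 1 - i) (fun i => n + 1 - i)
    (fun i hi => by simp at hi ⊢; omega) (fun i hi => by simp at hi ⊢; omega)
    (fun i hi => by simp at hi; omega) (fun i hi => by simp at hi; omega) (fun _ _ => rfl)

theorem sum_Icc_one_div_reflect (r : ℕ) :
    ∑ i ∈ Icc 1 r, 1 / ((r : ℝ) + 1 - i) = ∑ k ∈ Icc 1 r, (1 : ℝ) / k := by
  rw [← sum_Icc_reflect (fun k => (1 : ℝ) / k)]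
  refine sum_congr rfl fun i hi => ?_
  rw [mem_Icc] at hi
  rw [Nat.cast_sub (by omega), Nat.cast_add_one]

theorem one_div_sub_monotoneOn (r : ℕ) :
    MonotoneOn (fun i : ℕ => 1 / ((r : ℝ) + 1 - i)) (Icc 1 r : Set ℕ) := by
  intro i _ j hj hij
  have hjr : (j : ℝ) ≤ r := by simp at hj; exact_mod_cast hj.2
  have hij' : (i : ℝ) ≤ j := by exact_mod_cast hij
  exact one_div_le_one_div_of_le (by linarith) (by linarith)

theorem factorLP_value_le_harmonic_general
    (r : ℕ) (Δ : ℕ → ℝ)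
    (htotal : ∑ i ∈ Finset.Icc 1 r, ((r : ℝ) + 1 - i) * Δ i ≤ r)
    (hprefix : ∀ ℓ ∈ Finset.Icc 1 r,
      (ℓ : ℝ) ≤ ∑ i ∈ Finset.Icc 1 ℓ, ((r : ℝ) + 1 - i) * Δ i) :
    ∑ i ∈ Finset.Icc 1 r, Δ i ≤ ∑ k ∈ Finset.Icc 1 r, (1 : ℝ) / k := by
  set c : ℕ → ℝ := fun i => (r : ℝ) + 1 - i
  have hle : ∀ i ∈ Icc 1 r, (i : ℝ) ≤ r := fun i hi => by
    rw [mem_Icc] at hi; exact_mod_cast hi.2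
  have hc : ∀ i ∈ Icc 1 r, 0 < c i := fun i hi => by
    simp only [c]; linarith [hle i hi]
  have hsum_sub (ℓ : ℕ) : ∑ i ∈ Icc 1 ℓ, (c i * Δ i - 1) = ∑ i ∈ Icc 1 ℓ, c i * Δ i - ℓ := by
    simp [sum_sub_distrib]
  have hbound := sum_Icc_mul_le_mul_sum_of_monotoneOn (y := fun i => c i * Δ i - 1) (W := 1)
    (one_div_sub_monotoneOn r)
    (fun i hi => by rw [div_le_one (hc i hi)]; simp only [c]; linarith [hle i hi])
    (fun ℓ hℓ => by rw [hsum_sub]; linarith [hprefix ℓ hℓ])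
  have hsplit : ∑ i ∈ Icc 1 r, 1 / c i * (c i * Δ i - 1) =
      ∑ i ∈ Icc 1 r, Δ i - ∑ i ∈ Icc 1 r, 1 / c i := by
    rw [← sum_sub_distrib]
    exact sum_congr rfl fun i hi => by field_simp [(hc i hi).ne']
  rw [hsplit, hsum_sub] at hbound
  rw [← sum_Icc_one_div_reflect]
  linarith

/-- Any feasible solution of (FactorLP) has objective value at most the
`r`-th harmonic number. -/
theorem factorLP_value_le_harmonic
    (r : ℕ) (hr : 1 ≤ r) (Δ : ℕ → ℝ)
    (hpos : ∀ i ∈ Finset.Icc 1 r, 0 ≤ Δ i)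
    (htotal : ∑ i ∈ Finset.Icc 1 r, ((r : ℝ) + 1 - i) * Δ i ≤ r)
    (hprefix : ∀ ℓ ∈ Finset.Icc 1 r,
      (ℓ : ℝ) ≤ ∑ i ∈ Finset.Icc 1 ℓ, ((r : ℝ) + 1 - i) * Δ i) :
    ∑ i ∈ Finset.Icc 1 r, Δ i ≤ ∑ k ∈ Finset.Icc 1 r, (1 : ℝ) / k :=
  factorLP_value_le_harmonic_general r Δ htotal hprefix
end

section
/- Let r ≥ 1 be a natural number and define a = 1, b_r = 0, and b_ℓ = 1/(r−ℓ) − 1/(r−ℓ+1) for 1 ≤ ℓ ≤ r−1. Then (i) a ≥ 0 and b_ℓ ≥ 0 for all 1 ≤ ℓ ≤ r; (ii) for every 1 ≤ i ≤ r, (r+1−i)·a − Σ_{ℓ=i}^{r} (r+1−i)·b_ℓ = 1, i.e., every dual constraint of (FactorLP) holds with equality; and (iii) the dual objective value satisfies r·a − Σ_{ℓ=1}^{r} ℓ·b_ℓ = H_r, where H_r = Σ_{k=1}^{r} 1/k is the r-th harmonic number. -/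
/-!
With `F ℓ = 1 / (r - ℓ + 1)` one has `b ℓ = F (ℓ + 1) - F ℓ` for `ℓ < r`, so the tail sums
telescope: `∑_{ℓ=i}^r b ℓ = 1 - 1 / (r + 1 - i)`, which makes every dual constraint tight.
Swapping the order of summation gives `∑ ℓ b ℓ = ∑_i ∑_{ℓ ≥ i} b ℓ = r - ∑_i 1 / (r + 1 - i)`,
and the last sum is `H_r` read backwards.
-/

open Finset

theorem sum_Icc_one_nsmul_eq_sum_Icc_sum_Icc {M : Type*} [AddCommMonoid M] (f : ℕ → M)
    (r : ℕ) :
    ∑ ℓ ∈ Icc 1 r, ℓ • f ℓ = ∑ i ∈ Icc 1 r, ∑ ℓ ∈ Icc i r, f ℓ := by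
  rw [sum_comm' (t' := Icc 1 r) (s' := fun ℓ => Icc 1 ℓ)
    (fun i ℓ => by simp only [mem_Icc]; omega)]
  simp

theorem sum_Icc_one_reflect {M : Type*} [AddCommMonoid M] (f : ℕ → M) (r : ℕ) :
    ∑ i ∈ Icc 1 r, f (r + 1 - i) = ∑ k ∈ Icc 1 r, f k := by
  simpa [Ico_add_one_right_eq_Icc] using sum_Ico_reflect f 1 (Nat.le_succ (r + 1))

section DualAssignment

variable {r : ℕ} {b : ℕ → ℝ}

theorem dualAssignment_tail_sum_eq (hbr : b r = 0)
    (hb : ∀ ℓ ∈ Icc 1 (r - 1), b ℓ = 1 / ((r : ℝ) - ℓ) - 1 / ((r : ℝ) - ℓ + 1))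
    {i : ℕ} (hi : i ∈ Icc 1 r) :
    ∑ ℓ ∈ Icc i r, b ℓ = 1 - 1 / ((r : ℝ) - i + 1) := by
  obtain ⟨hi1, hir⟩ := mem_Icc.1 hi
  set F : ℕ → ℝ := fun ℓ => 1 / ((r : ℝ) - ℓ + 1) with hF
  have hbF : ∀ ℓ ∈ Ico i r, b ℓ = F (ℓ + 1) - F ℓ := fun ℓ hℓ => by
    obtain ⟨hiℓ, hℓr⟩ := mem_Ico.1 hℓ
    rw [hb ℓ (mem_Icc.2 ⟨by omega, by omega⟩), hF]
    push_cast
    ring_nf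
  calc ∑ ℓ ∈ Icc i r, b ℓ = ∑ ℓ ∈ Ico i r, b ℓ + b r := by
        rw [← Ico_add_one_right_eq_Icc, sum_Ico_succ_top hir]
    _ = F r - F i := by rw [hbr, add_zero, sum_congr rfl hbF, sum_Ico_sub F hir]
    _ = 1 - 1 / ((r : ℝ) - i + 1) := by simp [hF]

theorem dualAssignment_nonneg (hbr : b r = 0)
    (hb : ∀ ℓ ∈ Icc 1 (r - 1), b ℓ = 1 / ((r : ℝ) - ℓ) - 1 / ((r : ℝ) - ℓ + 1))
    {ℓ : ℕ} (hℓ : ℓ ∈ Icc 1 r) : 0 ≤ b ℓ := by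
  obtain ⟨hℓ1, hℓr⟩ := mem_Icc.1 hℓ
  rcases hℓr.eq_or_lt with rfl | hlt
  · exact hbr.ge
  have hpos : (0 : ℝ) < r - ℓ := sub_pos.2 (Nat.cast_lt.2 hlt)
  rw [hb ℓ (mem_Icc.2 ⟨hℓ1, by omega⟩), sub_nonneg]
  exact one_div_le_one_div_of_le hpos (by linarith)

theorem dualAssignment_constraint_eq_one (hbr : b r = 0)
    (hb : ∀ ℓ ∈ Icc 1 (r - 1), b ℓ = 1 / ((r : ℝ) - ℓ) - 1 / ((r : ℝ) - ℓ + 1))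
    {i : ℕ} (hi : i ∈ Icc 1 r) :
    ((r : ℝ) + 1 - i) - ∑ ℓ ∈ Icc i r, ((r : ℝ) + 1 - i) * b ℓ = 1 := by
  have hpos : (0 : ℝ) < r - i + 1 := by
    have : (i : ℝ) ≤ r := Nat.cast_le.2 (mem_Icc.1 hi).2
    linarith
  rw [← mul_sum, dualAssignment_tail_sum_eq hbr hb hi]
  field_simp
  ring

theorem dualAssignment_objective_eq_harmonic (hbr : b r = 0)
    (hb : ∀ ℓ ∈ Icc 1 (r - 1), b ℓ = 1 / ((r : ℝ) - ℓ) - 1 / ((r : ℝ) - ℓ + 1)) :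
    (r : ℝ) - ∑ ℓ ∈ Icc 1 r, (ℓ : ℝ) * b ℓ = ∑ k ∈ Icc 1 r, (1 : ℝ) / k := by
  have hreflect : ∀ i ∈ Icc 1 r, 1 / ((r : ℝ) - i + 1) = 1 / ((r + 1 - i : ℕ) : ℝ) :=
    fun i hi => by rw [Nat.cast_sub (Nat.le_succ_of_le (mem_Icc.1 hi).2)]; push_cast; ring
  simp_rw [← nsmul_eq_mul]
  rw [sum_Icc_one_nsmul_eq_sum_Icc_sum_Icc,
    sum_congr rfl fun i hi => dualAssignment_tail_sum_eq hbr hb hi, sum_sub_distrib,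
    sum_congr rfl hreflect, sum_Icc_one_reflect (fun k => 1 / (k : ℝ))]
  simp

end DualAssignment

theorem factorLP_dual_assignment_general
    (r : ℕ) (a : ℝ) (b : ℕ → ℝ)
    (ha : a = 1) (hbr : b r = 0)
    (hb : ∀ ℓ ∈ Finset.Icc 1 (r - 1),
      b ℓ = 1 / ((r : ℝ) - ℓ) - 1 / ((r : ℝ) - ℓ + 1)) :
    (0 ≤ a ∧ ∀ ℓ ∈ Finset.Icc 1 r, 0 ≤ b ℓ) ∧
    (∀ i ∈ Finset.Icc 1 r,
      ((r : ℝ) + 1 - i) * a - ∑ ℓ ∈ Finset.Icc i r, ((r : ℝ) + 1 - i) * b ℓ = 1) ∧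
    ((r : ℝ) * a - ∑ ℓ ∈ Finset.Icc 1 r, (ℓ : ℝ) * b ℓ
      = ∑ k ∈ Finset.Icc 1 r, (1 : ℝ) / k) := by
  subst ha
  simp only [mul_one]
  exact ⟨⟨zero_le_one, fun ℓ => dualAssignment_nonneg hbr hb⟩,
    fun i => dualAssignment_constraint_eq_one hbr hb, dualAssignment_objective_eq_harmonic hbr hb⟩

/-- The explicit dual assignment `a = 1`, `b r = 0`,
`b ℓ = 1/(r-ℓ) - 1/(r-ℓ+1)` for `1 ≤ ℓ ≤ r-1` is nonnegative, satisfies every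
dual constraint of (FactorLP) with equality, and has dual objective value
equal to the `r`-th harmonic number. -/
theorem factorLP_dual_assignment
    (r : ℕ) (hr : 1 ≤ r) (a : ℝ) (b : ℕ → ℝ)
    (ha : a = 1) (hbr : b r = 0)
    (hb : ∀ ℓ ∈ Finset.Icc 1 (r - 1),
      b ℓ = 1 / ((r : ℝ) - ℓ) - 1 / ((r : ℝ) - ℓ + 1)) :
    (0 ≤ a ∧ ∀ ℓ ∈ Finset.Icc 1 r, 0 ≤ b ℓ) ∧
    (∀ i ∈ Finset.Icc 1 r,
      ((r : ℝ) + 1 - i) * a - ∑ ℓ ∈ Finset.Icc i r, ((r : ℝ) + 1 - i) * b ℓ = 1) ∧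
    ((r : ℝ) * a - ∑ ℓ ∈ Finset.Icc 1 r, (ℓ : ℝ) * b ℓ
      = ∑ k ∈ Finset.Icc 1 r, (1 : ℝ) / k) :=
  factorLP_dual_assignment_general r a b ha hbr hb
end

section
/- Let J and D be finite sets, let w : J → ℝ with w j ≥ 0, y : J → ℝ with y j > 0, p : J → ℝ with p j > 0 for all j ∈ J, let b : D → J → ℝ, η : D → ℝ, and let M ≥ 0 be a real number. Assume (i) for every j ∈ J, w j / y j = Σ_{d ∈ D} b d j · η d; (ii) for every d ∈ D, η d · (1 − Σ_{j ∈ J} b d j · y j) = 0; and (iii) Σ_{j ∈ J with y j / p j ≥ M} w j ≥ (1/2) Σ_{j ∈ J} w j. Then M · Σ_{d ∈ D} η d ≤ 2 · Σ_{j ∈ J} w j · y j / p j. -/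
open Finset

/-! Complementary slackness gives `η d = η d * ∑ j, b d j * y j`; summing over `d`, exchanging the
sums and using stationarity yields `∑ d, η d = ∑ j, w j`. The median condition then says that at
least half of this weight sits on indices with `y j / p j ≥ M`, so a weighted Markov inequality bounds
`M * ∑ j, w j` by twice `∑ j, w j * (y j / p j)`. -/

section

variable {J D : Type*} [Fintype J] [Fintype D]

theorem sum_multipliers_eq_sum_weights (w y : J → ℝ) (b : D → J → ℝ) (η : D → ℝ)
    (hy : ∀ j, y j ≠ 0)
    (hstat : ∀ j, w j / y j = ∑ d, b d j * η d)
    (hcs : ∀ d, η d * (1 - ∑ j, b d j * y j) = 0) :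
    ∑ d, η d = ∑ j, w j := by
  have hslack : ∀ d, η d = ∑ j, η d * (b d j * y j) := fun d => by
    rw [← mul_sum]; linear_combination hcs d
  calc ∑ d, η d = ∑ d, ∑ j, η d * (b d j * y j) := sum_congr rfl fun d _ => hslack d
    _ = ∑ j, (∑ d, b d j * η d) * y j := by
        rw [sum_comm]; simp only [sum_mul]; exact sum_congr rfl fun _ _ => sum_congr rfl fun _ _ => by ring
    _ = ∑ j, w j := sum_congr rfl fun j _ => by rw [← hstat j, div_mul_cancel₀ _ (hy j)]

theorem mul_sum_ite_le_sum_mul (w r : J → ℝ) (M : ℝ) (hw : ∀ j, 0 ≤ w j) (hr : ∀ j, 0 ≤ r j) :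
    M * ∑ j, (if M ≤ r j then w j else 0) ≤ ∑ j, w j * r j := by
  rw [mul_sum]
  refine sum_le_sum fun j _ => ?_
  split_ifs with h
  · rw [mul_comm]; exact mul_le_mul_of_nonneg_left h (hw j)
  · simp only [mul_zero]; exact mul_nonneg (hw j) (hr j)

theorem mul_sum_le_two_mul_sum_of_weighted_median (w r : J → ℝ) (M : ℝ)
    (hw : ∀ j, 0 ≤ w j) (hr : ∀ j, 0 ≤ r j) (hM : 0 ≤ M)
    (hmed : (1 / 2) * ∑ j, w j ≤ ∑ j, (if M ≤ r j then w j else 0)) :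
    M * ∑ j, w j ≤ 2 * ∑ j, w j * r j := by
  have := mul_le_mul_of_nonneg_left hmed hM
  linarith [mul_sum_ite_le_sum_mul w r M hw hr]

end

/-- Per-time-step inequality in the bound on the dual variables β: given the
KKT conditions of the Proportional Fairness program and a weighted-median
threshold `M`, the multiplier mass scaled by `M` is at most twice the total
weighted normalized rate. -/
theorem median_times_multipliers_le
    (J D : Type*) [Fintype J] [Fintype D]
    (w y p : J → ℝ) (b : D → J → ℝ) (η : D → ℝ) (M : ℝ)
    (hw : ∀ j, 0 ≤ w j) (hy : ∀ j, 0 < y j) (hp : ∀ j, 0 < p j) (hM : 0 ≤ M)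
    (hstat : ∀ j, w j / y j = ∑ d, b d j * η d)
    (hcs : ∀ d, η d * (1 - ∑ j, b d j * y j) = 0)
    (hmed : (1 / 2) * ∑ j, w j ≤ ∑ j, (if M ≤ y j / p j then w j else 0)) :
    M * ∑ d, η d ≤ 2 * ∑ j, w j * y j / p j := by
  rw [sum_multipliers_eq_sum_weights w y b η (fun j => (hy j).ne') hstat hcs]
  simp only [mul_div_assoc]
  exact mul_sum_le_two_mul_sum_of_weighted_median w (fun j => y j / p j) M hw
    (fun j => div_nonneg (hy j).le (hp j).le) hM hmed
end

section
/- Let L be a natural number, δ > 0 and ε' > 0 real, and define γ_i = δ(1+ε')^i for 0 ≤ i ≤ L and |I_i| = γ_i − γ_{i−1} for 1 ≤ i ≤ L. Let s : {1, …, L} → ℝ satisfy 0 ≤ s_i ≤ |I_i| for all i, and let Y ≥ 0 be a real with Σ_{i=1}^{L} s_i ≥ Y. Then (1+ε') · Σ_{i=1}^{L} s_i · γ_{i−1} ≥ Y² / 2. -/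
/-!
Write `T i = s 1 + ⋯ + s i`. Telescoping the bounds `s i ≤ γ i - γ (i-1)` gives `T i ≤ γ i`,
and since `T i ^ 2 - T (i-1) ^ 2 = s i (T i + T (i-1)) ≤ 2 s i T i`, a discrete version of
`Y ^ 2 / 2 = ∫₀^Y t dt` gives `T L ^ 2 / 2 ≤ ∑ s i T i ≤ ∑ s i γ i = (1 + ε') ∑ s i γ (i-1)`.
-/

open Finset

lemma sum_Icc_le_sub_of_le_sub {s g : ℕ → ℝ} {n : ℕ}
    (hs : ∀ i ∈ Icc 1 n, s i ≤ g i - g (i - 1)) :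
    ∑ i ∈ Icc 1 n, s i ≤ g n - g 0 := by
  induction n with
  | zero => simp
  | succ k ih =>
    rw [sum_Icc_succ_top (by omega)]
    have hk := hs (k + 1) (by simp)
    have := ih fun i hi => hs i (Icc_subset_Icc_right (by omega) hi)
    simp only [add_tsub_cancel_right] at hk
    linarith

lemma sq_sum_Icc_le_two_mul_sum_mul_partialSum {s : ℕ → ℝ} {n : ℕ}
    (hs : ∀ i ∈ Icc 1 n, 0 ≤ s i) :
    (∑ i ∈ Icc 1 n, s i) ^ 2 ≤ 2 * ∑ i ∈ Icc 1 n, s i * ∑ j ∈ Icc 1 i, s j := by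
  induction n with
  | zero => simp
  | succ k ih =>
    have hs' : ∀ i ∈ Icc 1 k, 0 ≤ s i := fun i hi => hs i (Icc_subset_Icc_right (by omega) hi)
    have hsk : 0 ≤ s (k + 1) := hs (k + 1) (by simp)
    have hT : 0 ≤ ∑ i ∈ Icc 1 k, s i := sum_nonneg hs'
    rw [sum_Icc_succ_top (by omega), sum_Icc_succ_top (by omega), sum_Icc_succ_top (by omega)]
    nlinarith [ih hs']

theorem geometric_grid_lower_bound_general
    (L : ℕ) (δ ε' : ℝ) (hδ : 0 < δ)
    (s : ℕ → ℝ) (Y : ℝ)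
    (hs0 : ∀ i ∈ Finset.Icc 1 L, 0 ≤ s i)
    (hsI : ∀ i ∈ Finset.Icc 1 L,
      s i ≤ δ * (1 + ε') ^ i - δ * (1 + ε') ^ (i - 1))
    (hY : 0 ≤ Y)
    (hsum : Y ≤ ∑ i ∈ Finset.Icc 1 L, s i) :
    Y ^ 2 / 2 ≤ (1 + ε') * ∑ i ∈ Finset.Icc 1 L, s i * (δ * (1 + ε') ^ (i - 1)) := by
  have hterm : ∀ i ∈ Icc 1 L,
      s i * ∑ j ∈ Icc 1 i, s j ≤ (1 + ε') * (s i * (δ * (1 + ε') ^ (i - 1))) := by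
    intro i hi
    obtain ⟨hi1, hiL⟩ := mem_Icc.mp hi
    have hpartial : ∑ j ∈ Icc 1 i, s j ≤ δ * (1 + ε') ^ i - δ * (1 + ε') ^ 0 :=
      sum_Icc_le_sub_of_le_sub fun j hj => hsI j (Icc_subset_Icc_right hiL hj)
    rw [pow_zero, mul_one] at hpartial
    have hγ : (1 + ε') * (δ * (1 + ε') ^ (i - 1)) = δ * (1 + ε') ^ i := by
      rw [mul_left_comm, mul_pow_sub_one (by omega)]
    calc s i * ∑ j ∈ Icc 1 i, s j ≤ s i * (δ * (1 + ε') ^ i) :=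
          mul_le_mul_of_nonneg_left (by linarith) (hs0 i hi)
      _ = (1 + ε') * (s i * (δ * (1 + ε') ^ (i - 1))) := by rw [← hγ]; ring
  calc Y ^ 2 / 2 ≤ (∑ i ∈ Icc 1 L, s i) ^ 2 / 2 := by gcongr
    _ ≤ ∑ i ∈ Icc 1 L, s i * ∑ j ∈ Icc 1 i, s j := by
        linarith [sq_sum_Icc_le_two_mul_sum_mul_partialSum hs0]
    _ ≤ ∑ i ∈ Icc 1 L, (1 + ε') * (s i * (δ * (1 + ε') ^ (i - 1))) := sum_le_sum hterm
    _ = _ := (mul_sum ..).symm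

/-- Core inequality of Lemma (set_bound): on the geometric grid
`γ i = δ(1+ε')^i`, if `0 ≤ s i ≤ γ i - γ (i-1)` and `∑ s i ≥ Y ≥ 0`, then
`(1+ε') ∑ s i · γ (i-1) ≥ Y²/2`. -/
theorem geometric_grid_lower_bound
    (L : ℕ) (δ ε' : ℝ) (hδ : 0 < δ) (hε : 0 < ε')
    (s : ℕ → ℝ) (Y : ℝ)
    (hs0 : ∀ i ∈ Finset.Icc 1 L, 0 ≤ s i)
    (hsI : ∀ i ∈ Finset.Icc 1 L,
      s i ≤ δ * (1 + ε') ^ i - δ * (1 + ε') ^ (i - 1))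
    (hY : 0 ≤ Y)
    (hsum : Y ≤ ∑ i ∈ Finset.Icc 1 L, s i) :
    Y ^ 2 / 2 ≤ (1 + ε') * ∑ i ∈ Finset.Icc 1 L, s i * (δ * (1 + ε') ^ (i - 1)) :=
  geometric_grid_lower_bound_general L δ ε' hδ s Y hs0 hsI hY hsum
end

section
/- Let L be a natural number, δ > 0 and ε' > 0 real, and define γ_i = δ(1+ε')^i for 0 ≤ i ≤ L and |I_i| = γ_i − γ_{i−1} for 1 ≤ i ≤ L. Let J' be a finite set, b : J' → ℝ with b_j ≥ 0, p : J' → ℝ with p_j > 0, and x : J' → {1, …, L} → ℝ with x_{j,i} ≥ 0, such that (a) Σ_{j ∈ J'} b_j · x_{j,i} ≤ 1 for every 1 ≤ i ≤ L, and (b) Σ_{i=1}^{L} x_{j,i} · |I_i| ≥ p_j for every j ∈ J'. Define C̄_j = Σ_{i=1}^{L} (x_{j,i}/p_j) · |I_i| · γ_{i−1}. Then (1+ε') · Σ_{j ∈ J'} b_j · p_j · C̄_j ≥ (1/2) · ( Σ_{j ∈ J'} b_j · p_j )². -/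
/-!
Put `a_i = (∑_j b_j x_{j,i}) |I_i|`, the load that the packing row carries on `I_i`. Full
processing gives `∑_j b_j p_j ≤ ∑_i a_i`, and the packing constraint gives `a_i ≤ |I_i|`, so the
prefix sums satisfy `∑_{k ≤ i} a_k ≤ γ_i - γ_0 ≤ γ_i`. Since `(1 + ε') γ_{i-1} = γ_i`, the
left-hand side equals `∑_i a_i γ_i`, which dominates `∑_i a_i ∑_{k ≤ i} a_k ≥ (∑_i a_i)² / 2`.
-/

open Finset

theorem Finset.sum_Icc_one_sub_pred {M : Type*} [AddCommGroup M] (f : ℕ → M) (n : ℕ) :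
    ∑ i ∈ Icc 1 n, (f i - f (i - 1)) = f n - f 0 := by
  induction n with
  | zero => simp
  | succ n ih =>
    rw [sum_Icc_succ_top (by omega), ih, Nat.add_sub_cancel]
    abel

/-- The discrete analogue of `(∫ a)² = 2 ∫ a(t) (∫_{s ≤ t} a(s)) dt`; the defect is `∑ a_i²`. -/
theorem Finset.sq_sum_Icc_le_two_mul_sum_mul_partialSum {R : Type*} [CommRing R] [LinearOrder R]
    [IsStrictOrderedRing R] (a : ℕ → R) (n : ℕ) :
    (∑ i ∈ Icc 1 n, a i) ^ 2 ≤ 2 * ∑ i ∈ Icc 1 n, a i * ∑ k ∈ Icc 1 i, a k := by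
  induction n with
  | zero => simp
  | succ n ih =>
    rw [sum_Icc_succ_top (by omega), sum_Icc_succ_top (by omega), sum_Icc_succ_top (by omega)]
    nlinarith [sq_nonneg (a (n + 1))]

theorem Finset.sq_sum_Icc_le_two_mul_sum_mul_of_le_sub {a g : ℕ → ℝ} {n : ℕ}
    (ha : ∀ i ∈ Icc 1 n, 0 ≤ a i) (hag : ∀ i ∈ Icc 1 n, a i ≤ g i - g (i - 1)) (hg : 0 ≤ g 0) :
    (∑ i ∈ Icc 1 n, a i) ^ 2 ≤ 2 * ∑ i ∈ Icc 1 n, a i * g i := by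
  have partialSum_le : ∀ i ∈ Icc 1 n, ∑ k ∈ Icc 1 i, a k ≤ g i := fun i hi => by
    have hsub : Icc 1 i ⊆ Icc 1 n := Icc_subset_Icc_right (mem_Icc.1 hi).2
    calc ∑ k ∈ Icc 1 i, a k ≤ ∑ k ∈ Icc 1 i, (g k - g (k - 1)) :=
          sum_le_sum fun k hk => hag k (hsub hk)
      _ = g i - g 0 := sum_Icc_one_sub_pred g i
      _ ≤ g i := by linarith
  calc (∑ i ∈ Icc 1 n, a i) ^ 2 ≤ 2 * ∑ i ∈ Icc 1 n, a i * ∑ k ∈ Icc 1 i, a k :=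
        sq_sum_Icc_le_two_mul_sum_mul_partialSum a n
    _ ≤ 2 * ∑ i ∈ Icc 1 n, a i * g i := by
        gcongr with i hi
        exacts [ha i hi, partialSum_le i hi]

/-- Lemma (set_bound) for a single packing row: for any LP solution satisfying
the packing constraint and fully processing each job, the weighted sum of
fractional completion times is at least half the squared total load, up to a
factor `(1+ε')`. -/
theorem set_bound
    (L : ℕ) (δ ε' : ℝ) (hδ : 0 < δ) (hε : 0 < ε')
    (J' : Type*) [Fintype J']
    (b p : J' → ℝ) (x : J' → ℕ → ℝ)
    (hb : ∀ j, 0 ≤ b j) (hp : ∀ j, 0 < p j)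
    (hx : ∀ j, ∀ i ∈ Finset.Icc 1 L, 0 ≤ x j i)
    (hpack : ∀ i ∈ Finset.Icc 1 L, ∑ j, b j * x j i ≤ 1)
    (hfull : ∀ j, p j ≤ ∑ i ∈ Finset.Icc 1 L,
      x j i * (δ * (1 + ε') ^ i - δ * (1 + ε') ^ (i - 1))) :
    (1 / 2) * (∑ j, b j * p j) ^ 2
      ≤ (1 + ε') * ∑ j, b j * p j *
          (∑ i ∈ Finset.Icc 1 L,
            (x j i / p j) * (δ * (1 + ε') ^ i - δ * (1 + ε') ^ (i - 1))
              * (δ * (1 + ε') ^ (i - 1))) := by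
  set γ : ℕ → ℝ := fun i => δ * (1 + ε') ^ i
  set a : ℕ → ℝ := fun i => (∑ j, b j * x j i) * (γ i - γ (i - 1))
  have hI : ∀ i ∈ Icc 1 L, 0 ≤ γ i - γ (i - 1) := fun i _ => by
    have : (1 + ε') ^ (i - 1) ≤ (1 + ε') ^ i := pow_le_pow_right₀ (by linarith) (Nat.sub_le i 1)
    simp only [γ]
    nlinarith
  have ha : ∀ i ∈ Icc 1 L, 0 ≤ a i := fun i hi =>
    mul_nonneg (sum_nonneg fun j _ => mul_nonneg (hb j) (hx j i hi)) (hI i hi)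
  have hag : ∀ i ∈ Icc 1 L, a i ≤ γ i - γ (i - 1) := fun i hi =>
    mul_le_of_le_one_left (hI i hi) (hpack i hi)
  have load_le : ∑ j, b j * p j ≤ ∑ i ∈ Icc 1 L, a i :=
    calc ∑ j, b j * p j
        ≤ ∑ j, b j * ∑ i ∈ Icc 1 L, x j i * (γ i - γ (i - 1)) :=
          sum_le_sum fun j _ => mul_le_mul_of_nonneg_left (hfull j) (hb j)
      _ = ∑ i ∈ Icc 1 L, a i := by
          simp only [a, mul_sum, sum_mul, mul_assoc]
          exact sum_comm
  have rhs_eq : (1 + ε') * ∑ j, b j * p j *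
      (∑ i ∈ Icc 1 L, (x j i / p j) * (γ i - γ (i - 1)) * γ (i - 1))
        = ∑ i ∈ Icc 1 L, a i * γ i := by
    simp only [a, mul_sum, sum_mul]
    rw [sum_comm]
    refine sum_congr rfl fun i hi => sum_congr rfl fun j _ => ?_
    -- `(1 + ε') γ_{i-1} = γ_i` needs `i ≥ 1`
    obtain ⟨k, rfl⟩ := Nat.exists_eq_add_of_le (mem_Icc.1 hi).1
    simp only [γ, add_comm 1 k, Nat.add_sub_cancel, pow_succ]
    field_simp [(hp j).ne']
  have load_nonneg : 0 ≤ ∑ j, b j * p j := sum_nonneg fun j _ => mul_nonneg (hb j) (hp j).le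
  rw [rhs_eq]
  nlinarith [pow_le_pow_left₀ load_nonneg load_le 2,
    sq_sum_Icc_le_two_mul_sum_mul_of_le_sub ha hag (by positivity : 0 ≤ γ 0)]
end

section
/- Let β > 1 and K ≥ 0 be reals, γ ∈ (0, 1], i a natural number, and let h : [0,1] → ℝ be an integrable function such that h(α) ≤ K · β^{i+1+α}/(β−1) for all α ∈ [0, γ) and h(α) ≤ K · β^{i+α}/(β−1) for all α ∈ [γ, 1]. Then ∫_0^1 h(α) dα ≤ (K·β/ln β) · β^{i−1+γ}, where ln denotes the natural logarithm. -/
open Real MeasureTheory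

theorem integral_const_rpow {β : ℝ} (hβ0 : 0 < β) (hβ1 : β ≠ 1) (a b : ℝ) :
    ∫ x in a..b, β ^ x = (β ^ b - β ^ a) / log β := by
  rw [eq_div_iff (log_ne_zero_of_pos_of_ne_one hβ0 hβ1), ← intervalIntegral.integral_mul_const]
  exact intervalIntegral.integral_eq_sub_of_hasDerivAt
    (fun x _ => (hasStrictDerivAt_const_rpow hβ0 x).hasDerivAt)
    (((continuous_const_rpow hβ0.ne').mul continuous_const).intervalIntegrable a b)

theorem integral_le_of_le_mul_const_rpow {f : ℝ → ℝ} {β c a b : ℝ}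
    (hβ0 : 0 < β) (hβ1 : β ≠ 1) (hab : a ≤ b) (hf : IntervalIntegrable f volume a b)
    (hle : ∀ x ∈ Set.Ioo a b, f x ≤ c * β ^ x) :
    ∫ x in a..b, f x ≤ c * ((β ^ b - β ^ a) / log β) := by
  rw [← integral_const_rpow hβ0 hβ1, ← intervalIntegral.integral_const_mul]
  exact intervalIntegral.integral_mono_on_of_le_Ioo hab hf
    ((continuous_const.mul (continuous_const_rpow hβ0.ne')).intervalIntegrable a b) hle

theorem expected_group_completion_bound_general
    (β K γ : ℝ) (i : ℕ)
    (hβ : 1 < β) (hγ0 : 0 < γ) (hγ1 : γ ≤ 1)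
    (h : ℝ → ℝ)
    (hint : IntervalIntegrable h MeasureTheory.volume 0 1)
    (h1 : ∀ α : ℝ, 0 ≤ α → α < γ →
      h α ≤ K * β ^ ((i : ℝ) + 1 + α) / (β - 1))
    (h2 : ∀ α : ℝ, γ ≤ α → α ≤ 1 →
      h α ≤ K * β ^ ((i : ℝ) + α) / (β - 1)) :
    (∫ α in (0 : ℝ)..1, h α)
      ≤ (K * β / Real.log β) * β ^ ((i : ℝ) - 1 + γ) := by
  have hβ0 : 0 < β := zero_lt_one.trans hβ
  have hγ : γ ∈ Set.uIcc (0 : ℝ) 1 := Set.mem_uIcc.mpr (.inl ⟨hγ0.le, hγ1⟩)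
  have hint_low := hint.mono_set (Set.uIcc_subset_uIcc_left hγ)
  have hint_high := hint.mono_set (Set.uIcc_subset_uIcc_right hγ)
  set c := K * β ^ (i : ℝ) / (β - 1) with hc
  have hlow : ∫ α in 0..γ, h α ≤ c * β * ((β ^ γ - β ^ (0 : ℝ)) / log β) :=
    integral_le_of_le_mul_const_rpow hβ0 hβ.ne' hγ0.le hint_low
      fun α hα => (h1 α hα.1.le hα.2).trans_eq <| by
        rw [rpow_add hβ0, rpow_add hβ0, rpow_one]; ring
  have hhigh : ∫ α in γ..1, h α ≤ c * ((β ^ (1 : ℝ) - β ^ γ) / log β) :=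
    integral_le_of_le_mul_const_rpow hβ0 hβ.ne' hγ1 hint_high
      fun α hα => (h2 α hα.1.le hα.2.le).trans_eq (by rw [rpow_add hβ0]; ring)
  rw [← intervalIntegral.integral_add_adjacent_intervals hint_low hint_high]
  calc _ ≤ _ := add_le_add hlow hhigh
    _ = _ := by
      -- the bound is attained: `c β (β^γ - 1) + c (β - β^γ) = c (β - 1) β^γ`
      have hβ1 : β - 1 ≠ 0 := sub_ne_zero.mpr hβ.ne'
      rw [hc, rpow_add hβ0, rpow_sub hβ0, rpow_zero, rpow_one]
      field_simp
      ring

/-- Expected group completion time bound: if `h` is bounded by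
`K·β^{i+1+α}/(β-1)` for `α < γ` and by `K·β^{i+α}/(β-1)` for `α ≥ γ`, then its
average over `α ∈ [0,1]` is at most `(K·β/ln β)·β^{i-1+γ}`. -/
theorem expected_group_completion_bound
    (β K γ : ℝ) (i : ℕ)
    (hβ : 1 < β) (hK : 0 ≤ K) (hγ0 : 0 < γ) (hγ1 : γ ≤ 1)
    (h : ℝ → ℝ)
    (hint : IntervalIntegrable h MeasureTheory.volume 0 1)
    (h1 : ∀ α : ℝ, 0 ≤ α → α < γ →
      h α ≤ K * β ^ ((i : ℝ) + 1 + α) / (β - 1))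
    (h2 : ∀ α : ℝ, γ ≤ α → α ≤ 1 →
      h α ≤ K * β ^ ((i : ℝ) + α) / (β - 1)) :
    (∫ α in (0 : ℝ)..1, h α)
      ≤ (K * β / Real.log β) * β ^ ((i : ℝ) - 1 + γ) :=
  expected_group_completion_bound_general β K γ i hβ hγ0 hγ1 h hint h1 h2
end
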